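/- If Ω is an infinite set and U generates Sym(Ω) as a monoid, then there exists a positive integer n such that every element of Sym(Ω) is a product of at most n elements of U. -/

import Mathlib

/-!
Every group seminorm on `Perm α` with `α` infinite is bounded, and the word length with respect
to a monoid generating set, symmetrised, is such a seminorm.

Identify `α` with `(ℤ × ℤ) × α`. If the permutations supported in the cell `{(0, -1)} × α` were
unbounded, choose such `h n` with norm beyond `4 p(shift n) + n` and store every `h i` in the
upper half of column `i` of a single permutation `G` (Galvin's trick): conjugating `G` by the
`n`-th column shift and taking the commutator with the downward shift of column `0` gives back
`h n`, so its norm is at most `4 p(shift n) + 2 p G + 2 p(down)`, absurd for large `n`.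
Conjugating by a fixed swap then bounds the setwise stabiliser `P` of `S = {(0, -1)} × α`, and
comparing the cardinalities of the four cells cut out by `S` and `f⁻¹ S` shows
`Perm α = P ρ P ρ P` for a single `ρ`.
-/

open Cardinal Set Equiv MulAction
open scoped commutatorElement Pointwise

universe u

namespace GroupSeminorm

variable {G : Type*} [Group G] (p : GroupSeminorm G)

theorem map_inv_mul_mul_le (a g : G) : p (a⁻¹ * g * a) ≤ p g + 2 * p a := by
  have := map_mul_le_add p (a⁻¹ * g) a
  have := map_mul_le_add p a⁻¹ g
  rw [map_inv_eq_map] at this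
  linarith

theorem map_commutatorElement_le (g h : G) : p ⁅g, h⁆ ≤ 2 * p g + 2 * p h := by
  rw [commutatorElement_def]
  have h₁ := map_mul_le_add p (g * h * g⁻¹) h⁻¹
  have h₂ := map_mul_le_add p (g * h) g⁻¹
  have h₃ := map_mul_le_add p g h
  rw [map_inv_eq_map] at h₁ h₂
  linarith

end GroupSeminorm

section Cardinal

variable {α : Type u}

theorem mk_eq_of_subset {s t : Set α} (hst : s ⊆ t) (hs : #s = #α) : #t = #α :=
  le_antisymm (mk_set_le t) (hs ▸ mk_le_mk_of_subset hst)

theorem exists_subset_mk_eq_and_mk_sdiff_eq {s : Set α} {c d : Cardinal.{u}} (h : #s = c + d) :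
    ∃ t ⊆ s, #t = c ∧ #(s \ t : Set α) = d := by
  obtain ⟨e⟩ : Nonempty (s ≃ c.out ⊕ d.out) := Cardinal.eq.1 (by simpa [mk_sum] using h)
  refine ⟨(↑) '' (e ⁻¹' range Sum.inl), fun x ⟨y, _, hy⟩ => hy ▸ y.2, ?_, ?_⟩
  · rw [mk_image_eq Subtype.val_injective, mk_preimage_equiv, mk_range_inl, lift_id, mk_out]
  · rw [← image_val_compl, ← preimage_compl, compl_range_inl, mk_image_eq Subtype.val_injective,
      mk_preimage_equiv, mk_range_inr, lift_id, mk_out]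

theorem mk_inter_compl_eq_of_lt (hα : ℵ₀ ≤ #α) {S X : Set α} (hS : #S = #α)
    (h : #(S ∩ X : Set α) < #α) : #(S ∩ Xᶜ : Set α) = #α := by
  refine (mk_set_le _).eq_of_not_lt fun h' => (lt_irrefl #S) ?_
  calc #S = #((S ∩ X) ∪ (S ∩ Xᶜ) : Set α) := by rw [inter_union_compl]
    _ ≤ #(S ∩ X : Set α) + #(S ∩ Xᶜ : Set α) := mk_union_le _ _
    _ < #α := add_lt_of_lt hα h h'
    _ = #S := hS.symm

end Cardinal

section Position

variable {α : Type u}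

def cellCard (S X : Set α) : Cardinal.{u} × Cardinal.{u} × Cardinal.{u} × Cardinal.{u} :=
  (#(S ∩ X : Set α), #(S ∩ Xᶜ : Set α), #(Sᶜ ∩ X : Set α), #(Sᶜ ∩ Xᶜ : Set α))

def InGeneralPosition (S X : Set α) : Prop :=
  cellCard S X = (#α, #α, #α, #α)

theorem InGeneralPosition.of_subsets {S X A₁ A₂ A₃ A₄ : Set α} (h₁ : A₁ ⊆ S ∩ X)
    (h₂ : A₂ ⊆ S ∩ Xᶜ) (h₃ : A₃ ⊆ Sᶜ ∩ X) (h₄ : A₄ ⊆ Sᶜ ∩ Xᶜ) (hA₁ : #A₁ = #α)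
    (hA₂ : #A₂ = #α) (hA₃ : #A₃ = #α) (hA₄ : #A₄ = #α) : InGeneralPosition S X := by
  simp only [InGeneralPosition, cellCard, mk_eq_of_subset h₁ hA₁, mk_eq_of_subset h₂ hA₂,
    mk_eq_of_subset h₃ hA₃, mk_eq_of_subset h₄ hA₄]

theorem InGeneralPosition.mk_eq {S X : Set α} (h : InGeneralPosition S X) : #X = #α :=
  mk_eq_of_subset inter_subset_right (congrArg Prod.fst h)

theorem InGeneralPosition.mk_compl_eq {S X : Set α} (h : InGeneralPosition S X) :
    #(Xᶜ : Set α) = #α :=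
  mk_eq_of_subset inter_subset_right (congrArg (·.2.1) h)

theorem InGeneralPosition.compl {S X : Set α} (h : InGeneralPosition S X) :
    InGeneralPosition S Xᶜ := by
  simp_all [InGeneralPosition, cellCard]

theorem cellCard_compl_eq {S X Y : Set α} (h : cellCard S X = cellCard S Y) :
    cellCard S Xᶜ = cellCard S Yᶜ := by
  simp_all [cellCard]

theorem cellCard_preimage (σ : Perm α) (S X : Set α) :
    cellCard (σ ⁻¹' S) (σ ⁻¹' X) = cellCard S X := by
  simp only [cellCard, ← preimage_compl, ← preimage_inter, mk_preimage_equiv]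

open Classical in
theorem exists_perm_of_cellCard_eq {S X Y : Set α} (h : cellCard S X = cellCard S Y) :
    ∃ g : Perm α, (∀ x, g x ∈ S ↔ x ∈ S) ∧ ∀ x, g x ∈ Y ↔ x ∈ X := by
  let c (Z : Set α) (x : α) : Bool × Bool := (decide (x ∈ S), decide (x ∈ Z))
  have hfib : ∀ i, #{x // c X x = i} = #{x // c Y x = i} := by
    simp only [cellCard, Prod.mk.injEq] at h
    obtain ⟨h₁, h₂, h₃, h₄⟩ := h
    rintro ⟨_ | _, _ | _⟩ <;>
      simp only [c, Prod.mk.injEq, decide_eq_true_iff, decide_eq_false_iff_not]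
    exacts [h₄, h₃, h₂, h₁]
  let e i := Classical.choice (Cardinal.eq.1 (hfib i))
  refine ⟨Equiv.ofFiberEquiv e, fun x => ?_, fun x => ?_⟩ <;>
    have := Equiv.ofFiberEquiv_map e x <;> simp_all [c]

end Position

section Moiety

variable {α : Type u}

theorem exists_inGeneralPosition (hα : ℵ₀ ≤ #α) {S : Set α} (hS : #S = #α)
    (hSc : #(Sᶜ : Set α) = #α) : ∃ H, InGeneralPosition S H := by
  obtain ⟨S₁, hS₁, hS₁κ, hS₁cκ⟩ :=
    exists_subset_mk_eq_and_mk_sdiff_eq (hS.trans (add_eq_self hα).symm)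
  obtain ⟨S₂, hS₂, hS₂κ, hS₂cκ⟩ :=
    exists_subset_mk_eq_and_mk_sdiff_eq (hSc.trans (add_eq_self hα).symm)
  refine ⟨S₁ ∪ S₂, .of_subsets (A₁ := S₁) (A₂ := S \ S₁) (A₃ := S₂) (A₄ := Sᶜ \ S₂)
    ?_ ?_ ?_ ?_ hS₁κ hS₁cκ hS₂κ hS₂cκ⟩
  all_goals intro x; have := @hS₁ x; have := @hS₂ x; simp; tauto

theorem mk_offDiag_cells_eq_or_mk_diag_cells_eq (hα : ℵ₀ ≤ #α) {S X : Set α} (hS : #S = #α)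
    (hSc : #(Sᶜ : Set α) = #α) (hX : #X = #α) (hXc : #(Xᶜ : Set α) = #α) :
    (#(S ∩ Xᶜ : Set α) = #α ∧ #(Sᶜ ∩ X : Set α) = #α) ∨
      (#(S ∩ X : Set α) = #α ∧ #(Sᶜ ∩ Xᶜ : Set α) = #α) := by
  by_cases ha : #(S ∩ X : Set α) = #α
  · by_cases hd : #(Sᶜ ∩ Xᶜ : Set α) = #α
    · exact .inr ⟨ha, hd⟩
    have hd := (mk_set_le _).lt_of_ne hd
    have hb := mk_inter_compl_eq_of_lt hα hXc (X := Sᶜ) (by rwa [inter_comm] at hd)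
    rw [compl_compl, inter_comm] at hb
    have hc := mk_inter_compl_eq_of_lt hα hSc hd
    rw [compl_compl] at hc
    exact .inl ⟨hb, hc⟩
  · have ha := (mk_set_le _).lt_of_ne ha
    have hc := mk_inter_compl_eq_of_lt hα hX (X := S) (by rwa [inter_comm] at ha)
    rw [inter_comm] at hc
    exact .inl ⟨mk_inter_compl_eq_of_lt hα hS ha, hc⟩

theorem exists_cellCard_eq_inGeneralPosition_of_offDiag (hα : ℵ₀ ≤ #α) {S H X : Set α}
    (hH : InGeneralPosition S H) (hb : #(S ∩ Xᶜ : Set α) = #α) (hc : #(Sᶜ ∩ X : Set α) = #α) :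
    ∃ T, cellCard S T = cellCard S X ∧ InGeneralPosition H T := by
  simp only [InGeneralPosition, cellCard, Prod.mk.injEq] at hH
  obtain ⟨h₁, h₂, h₃, h₄⟩ := hH
  obtain ⟨A, hA, hAa, hAc⟩ := exists_subset_mk_eq_and_mk_sdiff_eq
    (h₁.trans (add_eq_right hα (mk_set_le (S ∩ X))).symm)
  obtain ⟨D, hD, hDd, hDc⟩ := exists_subset_mk_eq_and_mk_sdiff_eq
    (h₄.trans (add_eq_right hα (mk_set_le (Sᶜ ∩ Xᶜ))).symm)
  simp only [subset_def, mem_inter_iff, mem_compl_iff] at hA hD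
  -- `A` and `D` copy the diagonal cells of `X` inside `S ∩ H` and `Sᶜ ∩ Hᶜ` leaving
  -- remainders of full size, so that `A ∪ Sᶜ \ D` is in general position w.r.t. `H`.
  have hST : S ∩ (A ∪ Sᶜ \ D) = A := by
    ext x; have := hA x; simp; tauto
  have hScT : Sᶜ ∩ (A ∪ Sᶜ \ D)ᶜ = D := by
    ext x; have := hA x; have := hD x; simp; tauto
  refine ⟨A ∪ Sᶜ \ D, ?_, .of_subsets (A₁ := Sᶜ ∩ H) (A₂ := (S ∩ H) \ A)
    (A₃ := (Sᶜ ∩ Hᶜ) \ D) (A₄ := S ∩ Hᶜ) ?_ ?_ ?_ ?_ h₃ hAc hDc h₂⟩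
  · simp only [cellCard, hST, hScT, hAa, hDd, hb, hc, Prod.mk.injEq, true_and, and_true]
    exact ⟨mk_eq_of_subset (s := S ∩ Hᶜ) (fun x => by have := hA x; simp; tauto) h₂,
      mk_eq_of_subset (s := Sᶜ ∩ H) (fun x => by have := hD x; simp; tauto) h₃⟩
  all_goals intro x; have := hA x; have := hD x; simp; tauto

theorem exists_cellCard_eq_inGeneralPosition (hα : ℵ₀ ≤ #α) {S H X : Set α}
    (hS : #S = #α) (hSc : #(Sᶜ : Set α) = #α) (hH : InGeneralPosition S H)
    (hX : #X = #α) (hXc : #(Xᶜ : Set α) = #α) :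
    ∃ T, cellCard S T = cellCard S X ∧ InGeneralPosition H T := by
  rcases mk_offDiag_cells_eq_or_mk_diag_cells_eq hα hS hSc hX hXc with ⟨hb, hc⟩ | ⟨ha, hd⟩
  · exact exists_cellCard_eq_inGeneralPosition_of_offDiag hα hH hb hc
  · obtain ⟨T, hT, hTH⟩ := exists_cellCard_eq_inGeneralPosition_of_offDiag (X := Xᶜ) hα hH
      (by rwa [compl_compl]) hd
    exact ⟨Tᶜ, by simpa using cellCard_compl_eq hT, hTH.compl⟩

theorem exists_perm_apply_mem_iff {S T : Set α} (h : #S = #T)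
    (hc : #(Sᶜ : Set α) = #(Tᶜ : Set α)) : ∃ g : Perm α, ∀ x, g x ∈ T ↔ x ∈ S := by
  obtain ⟨g, -, hg⟩ := exists_perm_of_cellCard_eq (S := univ) (X := S) (Y := T) (by
    simp [cellCard, h, hc])
  exact ⟨g, hg⟩

theorem exists_forall_eq_stabilizer_mul_mul_stabilizer (hα : ℵ₀ ≤ #α) {S : Set α} (hS : #S = #α)
    (hSc : #(Sᶜ : Set α) = #α) : ∃ ρ : Perm α, ∀ f : Perm α,
      ∃ a ∈ stabilizer (Perm α) S, ∃ b ∈ stabilizer (Perm α) S, ∃ c ∈ stabilizer (Perm α) S,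
        f = a * ρ * b * ρ * c := by
  obtain ⟨H, hH⟩ := exists_inGeneralPosition hα hS hSc
  obtain ⟨ρ, hρ⟩ := exists_perm_apply_mem_iff (hS.trans hH.mk_eq.symm)
    (hSc.trans hH.mk_compl_eq.symm)
  refine ⟨ρ⁻¹, fun f => ?_⟩
  obtain ⟨T, hT, hTH⟩ := exists_cellCard_eq_inGeneralPosition hα hS hSc hH
    (X := f ⁻¹' S) (by rwa [mk_preimage_equiv]) (by rwa [← preimage_compl, mk_preimage_equiv])
  -- Pulling `S` back along `f`, `g₀`, `ρ`, `g₁`, `ρ` in turn gives `f⁻¹ S`, `T`, a set in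
  -- general position w.r.t. `S`, `H`, and `S` again.
  obtain ⟨g₀, hg₀S, hg₀⟩ := exists_perm_of_cellCard_eq hT
  have hρH : ρ ⁻¹' H = S := ext hρ
  obtain ⟨g₁, hg₁S, hg₁⟩ := exists_perm_of_cellCard_eq (S := S) (X := H) (Y := ρ ⁻¹' T) (by
    rw [← hρH, cellCard_preimage, hρH, hH, hTH])
  have hw : f * g₀ * ρ * g₁ * ρ ∈ stabilizer (Perm α) S := by
    refine mem_stabilizer_set.2 fun x => ?_
    simp only [Perm.smul_def, Perm.mul_apply]
    rw [← mem_preimage (f := f), hg₀, ← mem_preimage (f := ρ), hg₁, hρ]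
  refine ⟨_, hw, g₁⁻¹, inv_mem (mem_stabilizer_set.2 hg₁S), g₀⁻¹,
    inv_mem (mem_stabilizer_set.2 hg₀S), by group⟩

theorem exists_mem_fixingSubgroup_compl_inv_mul_mem {S : Set α} {g : Perm α}
    (hg : g ∈ stabilizer (Perm α) S) :
    ∃ v ∈ fixingSubgroup (Perm α) Sᶜ, v⁻¹ * g ∈ fixingSubgroup (Perm α) S := by
  classical
  have hg : ∀ x, g x ∈ S ↔ x ∈ S := by simpa using mem_stabilizer_set.1 hg
  refine ⟨Perm.ofSubtype (g.subtypePerm hg), (mem_fixingSubgroup_iff _).2 fun x hx =>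
    Perm.ofSubtype_apply_of_not_mem _ hx, (mem_fixingSubgroup_iff _).2 fun x hx => ?_⟩
  rw [Perm.smul_def, Perm.mul_apply, Perm.inv_eq_iff_eq, Perm.ofSubtype_subtypePerm_of_mem _ hx]

theorem GroupSeminorm.bddAbove_range_of_bddAbove_fixingSubgroup (p : GroupSeminorm (Perm α))
    (hα : ℵ₀ ≤ #α) {S : Set α} (hS : #S = #α) (hSc : #(Sᶜ : Set α) = #α)
    (hp : BddAbove (p '' fixingSubgroup (Perm α) Sᶜ)) : BddAbove (range p) := by
  obtain ⟨C, hC⟩ := hp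
  replace hC : ∀ v ∈ fixingSubgroup (Perm α) Sᶜ, p v ≤ C := fun v hv => hC ⟨v, hv, rfl⟩
  obtain ⟨τ, hτ⟩ :=
    exists_perm_apply_mem_iff (T := Sᶜ) (hS.trans hSc.symm) (by rw [compl_compl, hS, hSc])
  have hfix : ∀ u ∈ fixingSubgroup (Perm α) S, p u ≤ C + 2 * p τ := by
    intro u hu
    have hconj : τ * u * τ⁻¹ ∈ fixingSubgroup (Perm α) Sᶜ := by
      refine (mem_fixingSubgroup_iff _).2 fun x hx => ?_
      have : τ⁻¹ x ∈ S := (hτ _).1 (by simpa using hx)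
      rw [Perm.smul_def, Perm.mul_apply, Perm.mul_apply, ← Perm.smul_def u,
        (mem_fixingSubgroup_iff _).1 hu _ this]
      exact τ.apply_symm_apply x
    calc p u = p (τ⁻¹ * (τ * u * τ⁻¹) * τ) := by group
      _ ≤ C + 2 * p τ := (p.map_inv_mul_mul_le _ _).trans (by linarith [hC _ hconj])
  have hstab : ∀ g ∈ stabilizer (Perm α) S, p g ≤ 2 * C + 2 * p τ := by
    intro g hg
    obtain ⟨v, hv, hvg⟩ := exists_mem_fixingSubgroup_compl_inv_mul_mem hg
    calc p g = p (v * (v⁻¹ * g)) := by group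
      _ ≤ p v + p (v⁻¹ * g) := map_mul_le_add p _ _
      _ ≤ 2 * C + 2 * p τ := by linarith [hC v hv, hfix _ hvg]
  obtain ⟨ρ, hρ⟩ := exists_forall_eq_stabilizer_mul_mul_stabilizer hα hS hSc
  refine ⟨3 * (2 * C + 2 * p τ) + 2 * p ρ, ?_⟩
  rintro _ ⟨f, rfl⟩
  obtain ⟨a, ha, b, hb, c, hc, rfl⟩ := hρ f
  have := map_mul_le_add p (a * ρ * b * ρ) c
  have := map_mul_le_add p (a * ρ * b) ρ
  have := map_mul_le_add p (a * ρ) b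
  have := map_mul_le_add p a ρ
  linarith [hstab a ha, hstab b hb, hstab c hc]

end Moiety

section Galvin

variable {ι B : Type*}

theorem prodCongr_inv_mul_prodCongrRight_mul_prodCongr (σ : Perm ι) (F : ι → Perm B) :
    (σ.prodCongr (Equiv.refl B))⁻¹ * prodCongrRight F * σ.prodCongr (Equiv.refl B) =
      prodCongrRight (F ∘ σ) := by
  ext ⟨c, b⟩ <;> simp [Perm.mul_apply]

theorem commutatorElement_prodCongrRight_prodCongr (F : ι → Perm B) (σ : Perm ι) :
    ⁅prodCongrRight F, σ.prodCongr (Equiv.refl B)⁆ =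
      prodCongrRight fun c => F c * (F (σ⁻¹ c))⁻¹ := by
  ext ⟨c, b⟩ <;> simp [commutatorElement_def, Perm.mul_apply]

theorem Equiv.Perm.prodExtendRight_eq_prodCongrRight [DecidableEq ι] (a : ι) (e : Perm B) :
    Perm.prodExtendRight a e = prodCongrRight fun c => if c = a then e else 1 := by
  ext ⟨c, b⟩ <;> by_cases h : c = a <;> simp [h, Perm.prodExtendRight_apply_ne]

def upperColumns (A : ℤ → Perm B) (c : ℤ × ℤ) : Perm B :=
  if 0 ≤ c.2 then A c.1 else 1

def columnDown : Perm (ℤ × ℤ) := Perm.prodExtendRight 0 (Equiv.addRight (-1))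

theorem upperColumns_mul_inv_columnDown (A : ℤ → Perm B) :
    (fun c => upperColumns A c * (upperColumns A (columnDown⁻¹ c))⁻¹) =
      fun c => if c = (0, -1) then (A 0)⁻¹ else 1 := by
  ext1 ⟨i, j⟩
  by_cases hi : i = 0
  · subst hi
    have : columnDown⁻¹ ((0 : ℤ), j) = (0, j + 1) := by
      rw [Perm.inv_eq_iff_eq]; simp [columnDown]
    rcases lt_trichotomy j (-1) with hj | rfl | hj
    · simp [this, upperColumns, hj.ne, show ¬ 0 ≤ j by omega, show ¬ 0 ≤ j + 1 by omega]
    · simp [this, upperColumns]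
    · simp [this, upperColumns, hj.ne', show 0 ≤ j by omega, show 0 ≤ j + 1 by omega]
  · have : columnDown⁻¹ (i, j) = (i, j) := by
      rw [Perm.inv_eq_iff_eq]; exact (Perm.prodExtendRight_apply_ne _ hi _).symm
    simp [this, hi]

def columnShift (n : ℤ) : Perm (ℤ × ℤ) := (Equiv.addRight n).prodCongr (Equiv.refl ℤ)

theorem prodExtendRight_eq_commutatorElement (A : ℤ → Perm B) (n : ℤ) :
    Perm.prodExtendRight ((0 : ℤ), (-1 : ℤ)) (A n)⁻¹ =
      ⁅((columnShift n).prodCongr (Equiv.refl B))⁻¹ * prodCongrRight (upperColumns A) *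
        (columnShift n).prodCongr (Equiv.refl B), columnDown.prodCongr (Equiv.refl B)⁆ := by
  have hshift : upperColumns A ∘ columnShift n = upperColumns fun i => A (i + n) := by
    ext1 ⟨i, j⟩; simp [upperColumns, columnShift]
  rw [prodCongr_inv_mul_prodCongrRight_mul_prodCongr, hshift,
    commutatorElement_prodCongrRight_prodCongr, upperColumns_mul_inv_columnDown, zero_add,
    Perm.prodExtendRight_eq_prodCongrRight]

theorem GroupSeminorm.bddAbove_image_range_prodExtendRight
    (p : GroupSeminorm (Perm ((ℤ × ℤ) × B))) :
    BddAbove (p '' range (Perm.prodExtendRight ((0 : ℤ), (-1 : ℤ)))) := by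
  set shift := fun n : ℤ => (columnShift n).prodCongr (Equiv.refl B)
  by_contra hp
  have : ∀ n : ℕ, ∃ h : Perm B,
      4 * p (shift n) + n < p (Perm.prodExtendRight ((0 : ℤ), (-1 : ℤ)) h) := fun n => by
    obtain ⟨_, ⟨_, ⟨h, rfl⟩, rfl⟩, hh⟩ := not_bddAbove_iff.1 hp (4 * p (shift n) + n)
    exact ⟨h, hh⟩
  choose H hH using this
  set G := prodCongrRight (upperColumns fun i => (H i.toNat)⁻¹)
  set c := columnDown.prodCongr (Equiv.refl B)
  set n := ⌈2 * p G + 2 * p c⌉₊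
  have key := prodExtendRight_eq_commutatorElement (fun i => (H i.toNat)⁻¹) n
  simp only [Int.toNat_natCast, inv_inv] at key
  have h₁ := map_commutatorElement_le p ((shift n)⁻¹ * G * shift n) c
  have h₂ := map_inv_mul_mul_le p (shift n) G
  have h₃ := Nat.le_ceil (2 * p G + 2 * p c)
  rw [← key] at h₁
  linarith [hH n]

theorem fixingSubgroup_compl_subset_range_prodExtendRight [DecidableEq ι] (a : ι) :
    (fixingSubgroup (Perm (ι × B)) {x : ι × B | x.1 = a}ᶜ : Set (Perm (ι × B))) ⊆
      range (Perm.prodExtendRight a) := by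
  intro g hg
  have hfix : ∀ g ∈ fixingSubgroup (Perm (ι × B)) {x : ι × B | x.1 = a}ᶜ, ∀ y : ι × B,
      y.1 ≠ a → g y = y :=
    fun g hg y hy => (mem_fixingSubgroup_iff _).1 hg y hy
  have hfib : ∀ g ∈ fixingSubgroup (Perm (ι × B)) {x : ι × B | x.1 = a}ᶜ, ∀ b,
      (a, (g (a, b)).2) = g (a, b) :=
    fun g hg b =>
      Prod.ext (by_contra fun h => h (by rw [g.injective (hfix g hg _ (Ne.symm h))])) rfl
  refine ⟨⟨fun b => (g (a, b)).2, fun b => (g⁻¹ (a, b)).2, fun b => ?_, fun b => ?_⟩, ?_⟩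
  · simp [hfib g hg]
  · simp only [hfib _ (inv_mem hg), ← Perm.mul_apply, mul_inv_cancel, Perm.one_apply]
  ext1 ⟨c, b⟩
  by_cases hc : c = a
  · subst hc; simp [hfib g hg]
  · rw [Perm.prodExtendRight_apply_ne _ hc, hfix g hg _ hc]

end Galvin

theorem GroupSeminorm.bddAbove_range_perm {α : Type u} [Infinite α]
    (p : GroupSeminorm (Perm α)) : BddAbove (range p) := by
  have hα := aleph0_le_mk α
  obtain ⟨e⟩ := Cardinal.eq.1 (show #((ℤ × ℤ) × α) = #α by
    simp [mk_prod, aleph0_mul_eq hα])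
  set q := p.comp e.permCongrHom.toMonoidHom
  have hfib (c : ℤ × ℤ) : #{x : (ℤ × ℤ) × α | x.1 = c} = #((ℤ × ℤ) × α) :=
    mk_congr <| Equiv.trans ⟨fun x => x.1.2, fun a => ⟨(c, a), rfl⟩,
      fun ⟨⟨_, _⟩, h⟩ => by subst h; rfl, fun _ => rfl⟩ e.symm
  set S := {x : (ℤ × ℤ) × α | x.1 = (0, -1)}
  have hSc : #(Sᶜ : Set ((ℤ × ℤ) × α)) = #((ℤ × ℤ) × α) :=
    mk_eq_of_subset (fun x hx hx' => by simp_all [S]) (hfib (0, 0))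
  obtain ⟨C, hC⟩ := q.bddAbove_range_of_bddAbove_fixingSubgroup (aleph0_le_mk _) (hfib _) hSc
    (q.bddAbove_image_range_prodExtendRight.mono
      (image_mono (fixingSubgroup_compl_subset_range_prodExtendRight _)))
  refine ⟨C, ?_⟩
  rintro _ ⟨f, rfl⟩
  simpa [q, ← permCongr_symm] using hC ⟨e.symm.permCongr f, rfl⟩

section WordLength

variable {M : Type*} [Monoid M] {U : Set M}

/-- `0` when `g` is not a product of elements of `U`. -/
noncomputable def wordLength (U : Set M) (g : M) : ℕ :=
  sInf {n | ∃ l : List M, l.length = n ∧ (∀ x ∈ l, x ∈ U) ∧ l.prod = g}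

theorem wordLength_prod_le {l : List M} (hl : ∀ x ∈ l, x ∈ U) :
    wordLength U l.prod ≤ l.length :=
  Nat.sInf_le ⟨l, rfl, hl, rfl⟩

theorem exists_list_length_eq_wordLength {g : M} (hg : g ∈ Submonoid.closure U) :
    ∃ l : List M, l.length = wordLength U g ∧ (∀ x ∈ l, x ∈ U) ∧ l.prod = g := by
  obtain ⟨l, hl, hprod⟩ := Submonoid.exists_list_of_mem_closure hg
  exact Nat.sInf_mem (s := {n | ∃ l : List M, l.length = n ∧ (∀ x ∈ l, x ∈ U) ∧ l.prod = g})
    ⟨l.length, l, rfl, hl, hprod⟩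

theorem wordLength_mul_le {g h : M} (hg : g ∈ Submonoid.closure U)
    (hh : h ∈ Submonoid.closure U) : wordLength U (g * h) ≤ wordLength U g + wordLength U h := by
  obtain ⟨l, hl, hlU, rfl⟩ := exists_list_length_eq_wordLength hg
  obtain ⟨m, hm, hmU, rfl⟩ := exists_list_length_eq_wordLength hh
  rw [← hl, ← hm, ← List.length_append, ← List.prod_append]
  exact wordLength_prod_le fun x hx => (List.mem_append.1 hx).elim (hlU x) (hmU x)

theorem wordLength_one : wordLength U 1 = 0 :=
  Nat.le_zero.1 (wordLength_prod_le (l := []) (by simp))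

noncomputable def wordSeminorm {G : Type*} [Group G] (U : Set G)
    (hU : Submonoid.closure U = ⊤) : GroupSeminorm G where
  toFun g := wordLength U g + wordLength U g⁻¹
  map_one' := by simp [wordLength_one]
  mul_le' g h := by
    have hmem : ∀ x : G, x ∈ Submonoid.closure U := fun x => hU ▸ Submonoid.mem_top x
    have h₁ := wordLength_mul_le (hmem g) (hmem h)
    have h₂ := wordLength_mul_le (hmem h⁻¹) (hmem g⁻¹)
    rw [mul_inv_rev]
    exact_mod_cast (by omega : wordLength U (g * h) + wordLength U (h⁻¹ * g⁻¹) ≤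
      wordLength U g + wordLength U g⁻¹ + (wordLength U h + wordLength U h⁻¹))
  inv' g := by simp [add_comm]

end WordLength

theorem stmt7 {Ω : Type*} [Infinite Ω] (U : Set (Equiv.Perm Ω))
    (hU : Submonoid.closure U = ⊤) :
    ∃ n : ℕ, 0 < n ∧ ∀ f : Equiv.Perm Ω, ∃ l : List (Equiv.Perm Ω),
      l.length ≤ n ∧ (∀ x ∈ l, x ∈ U) ∧ l.prod = f := by
  obtain ⟨C, hC⟩ := (wordSeminorm U hU).bddAbove_range_perm
  refine ⟨⌊C⌋₊ + 1, Nat.succ_pos _, fun f => ?_⟩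
  obtain ⟨l, hl, hlU, rfl⟩ := exists_list_length_eq_wordLength (hU ▸ Submonoid.mem_top f)
  refine ⟨l, ?_, hlU, rfl⟩
  have hle : (wordLength U l.prod : ℝ) ≤ C :=
    le_trans (le_add_of_nonneg_right (Nat.cast_nonneg _)) (hC ⟨l.prod, rfl⟩)
  have hfloor := Nat.le_floor hle
  omega
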